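/- arXiv:1811.04016 — 6 statements merged into one kernel-verified Lean document; each statement's English description precedes it below -/
import Mathlib

section
/- For every ε > 0, b₀ ≥ 0, every integer n ≥ 1, every x ∈ ℝ and every t > 0, the functions csₙ(x,t) := tⁿ(1 − s(x,t)) satisfy the recurrence ∂ₜ csₙ(x,t) − ε ∂ₓₓ csₙ(x,t) + b₀ csₙ(x,t) = n cs_{n−1}(x,t) + b₀ tⁿ. -/
/-- The error function `erf z = (2/√π) ∫₀^z e^{-r²} dr`. -/
noncomputable def erf (z : ℝ) : ℝ :=
  2 / Real.sqrt Real.pi * ∫ r in (0:ℝ)..z, Real.exp (-r ^ 2)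

/-- The singular function `s(x,t) = e^{-b₀ t} erf(x/(2√(ε t)))`. -/
noncomputable def s (ε b₀ x t : ℝ) : ℝ :=
  Real.exp (-b₀ * t) * erf (x / (2 * Real.sqrt (ε * t)))

/-- The complementary family `csₙ(x,t) := tⁿ (1 − s(x,t))`. -/
noncomputable def csN (ε b₀ : ℝ) (n : ℕ) (x t : ℝ) : ℝ := t ^ n * (1 - s ε b₀ x t)

lemma erf_hasDerivAt (z : ℝ) :
    HasDerivAt erf (2 / Real.sqrt Real.pi * Real.exp (-z ^ 2)) z := by
  have hc : Continuous fun r : ℝ => Real.exp (-r ^ 2) := by continuity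
  exact ((hc.integral_hasStrictDerivAt 0 z).hasDerivAt).const_mul (2 / Real.sqrt Real.pi)

/-- For every `ε > 0`, `b₀ ≥ 0`, integer `n ≥ 1`, `x ∈ ℝ` and `t > 0`, the functions
`csₙ(x,t) = tⁿ(1 − s(x,t))` satisfy
`∂ₜ csₙ − ε ∂ₓₓ csₙ + b₀ csₙ = n cs_{n−1} + b₀ tⁿ`. -/
theorem csN_recurrence (ε b₀ : ℝ) (hε : 0 < ε) (hb : 0 ≤ b₀) (n : ℕ) (hn : 1 ≤ n)
    (x t : ℝ) (ht : 0 < t) :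
    deriv (fun τ => csN ε b₀ n x τ) t
      - ε * deriv (deriv (fun ξ => csN ε b₀ n ξ t)) x
      + b₀ * csN ε b₀ n x t = (n : ℝ) * csN ε b₀ (n - 1) x t + b₀ * t ^ n := by
  have hεt : (0:ℝ) < ε * t := mul_pos hε ht
  set S := Real.sqrt (ε * t) with hSdef
  have hS : 0 < S := Real.sqrt_pos.mpr hεt
  have h2S : (2 * S) ≠ 0 := by positivity
  -- spatial derivative
  have hsx : ∀ ξ : ℝ, HasDerivAt (fun ξ => csN ε b₀ n ξ t)
      (t ^ n * (0 - Real.exp (-b₀ * t) *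
        (2 / Real.sqrt Real.pi * Real.exp (-(ξ / (2 * S)) ^ 2) * (1 / (2 * S))))) ξ := by
    intro ξ
    have hdiv : HasDerivAt (fun ξ : ℝ => ξ / (2 * S)) (1 / (2 * S)) ξ := by
      simpa using (hasDerivAt_id ξ).div_const (2 * S)
    have herf := (erf_hasDerivAt (ξ / (2 * S))).comp ξ hdiv
    have hs : HasDerivAt (fun ξ => s ε b₀ ξ t)
        (Real.exp (-b₀ * t) *
          (2 / Real.sqrt Real.pi * Real.exp (-(ξ / (2 * S)) ^ 2) * (1 / (2 * S)))) ξ := by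
      simpa [s, hSdef, mul_assoc] using herf.const_mul (Real.exp (-b₀ * t))
    simpa [csN] using ((hasDerivAt_const ξ (1:ℝ)).sub hs).const_mul (t ^ n)
  have hd1 : deriv (fun ξ => csN ε b₀ n ξ t) = fun ξ =>
      t ^ n * (0 - Real.exp (-b₀ * t) *
        (2 / Real.sqrt Real.pi * Real.exp (-(ξ / (2 * S)) ^ 2) * (1 / (2 * S)))) :=
    funext fun ξ => (hsx ξ).deriv
  -- second spatial derivative at x
  have hexp : HasDerivAt (fun ξ : ℝ => Real.exp (-(ξ / (2 * S)) ^ 2))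
      (Real.exp (-(x / (2 * S)) ^ 2) * (-(2 * (x / (2 * S)) ^ 1 * (1 / (2 * S))))) x := by
    have hdiv : HasDerivAt (fun ξ : ℝ => ξ / (2 * S)) (1 / (2 * S)) x := by
      simpa using (hasDerivAt_id x).div_const (2 * S)
    exact ((hdiv.pow 2).neg).exp
  have hd2 : HasDerivAt (fun ξ =>
      t ^ n * (0 - Real.exp (-b₀ * t) *
        (2 / Real.sqrt Real.pi * Real.exp (-(ξ / (2 * S)) ^ 2) * (1 / (2 * S)))))
      (t ^ n * (0 - Real.exp (-b₀ * t) *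
        (2 / Real.sqrt Real.pi *
          (Real.exp (-(x / (2 * S)) ^ 2) * (-(2 * (x / (2 * S)) ^ 1 * (1 / (2 * S))))) *
          (1 / (2 * S))))) x := by
    have h1 := ((hexp.const_mul (2 / Real.sqrt Real.pi)).mul_const (1 / (2 * S))).const_mul
      (Real.exp (-b₀ * t))
    have h2 := ((hasDerivAt_const x (0:ℝ)).sub h1).const_mul (t ^ n)
    exact h2
  have hV2 : deriv (deriv (fun ξ => csN ε b₀ n ξ t)) x
      = t ^ n * (0 - Real.exp (-b₀ * t) *
        (2 / Real.sqrt Real.pi *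
          (Real.exp (-(x / (2 * S)) ^ 2) * (-(2 * (x / (2 * S)) ^ 1 * (1 / (2 * S))))) *
          (1 / (2 * S)))) := by
    rw [hd1]; exact hd2.deriv
  -- time derivative
  have hsqrt : HasDerivAt (fun τ : ℝ => Real.sqrt (ε * τ)) (1 / (2 * S) * ε) t := by
    have h1 : HasDerivAt (fun τ : ℝ => ε * τ) ε t := by
      simpa using (hasDerivAt_id t).const_mul ε
    exact (Real.hasDerivAt_sqrt (ne_of_gt hεt)).comp t h1
  have h2sqrt : HasDerivAt (fun τ : ℝ => 2 * Real.sqrt (ε * τ)) (2 * (1 / (2 * S) * ε)) t :=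
    hsqrt.const_mul 2
  have hz : HasDerivAt (fun τ : ℝ => x / (2 * Real.sqrt (ε * τ)))
      ((0 * (2 * S) - x * (2 * (1 / (2 * S) * ε))) / (2 * S) ^ 2) t :=
    (hasDerivAt_const t x).div h2sqrt h2S
  have herf2 : HasDerivAt (fun τ : ℝ => erf (x / (2 * Real.sqrt (ε * τ))))
      (2 / Real.sqrt Real.pi * Real.exp (-(x / (2 * S)) ^ 2) *
        ((0 * (2 * S) - x * (2 * (1 / (2 * S) * ε))) / (2 * S) ^ 2)) t :=
    (erf_hasDerivAt (x / (2 * S))).comp (h := fun τ : ℝ => x / (2 * Real.sqrt (ε * τ))) t hz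
  have hE : HasDerivAt (fun τ : ℝ => Real.exp (-b₀ * τ)) (Real.exp (-b₀ * t) * (-b₀)) t := by
    have h1 : HasDerivAt (fun τ : ℝ => -b₀ * τ) (-b₀) t := by
      simpa using (hasDerivAt_id t).const_mul (-b₀)
    exact h1.exp
  have hst : HasDerivAt (fun τ => csN ε b₀ n x τ)
      ((n : ℝ) * t ^ (n - 1) * (1 - Real.exp (-b₀ * t) * erf (x / (2 * S)))
        + t ^ n * (0 - (Real.exp (-b₀ * t) * (-b₀) * erf (x / (2 * S))
          + Real.exp (-b₀ * t) *
            (2 / Real.sqrt Real.pi * Real.exp (-(x / (2 * S)) ^ 2) *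
              ((0 * (2 * S) - x * (2 * (1 / (2 * S) * ε))) / (2 * S) ^ 2))))) t := by
    have hprod := hE.mul herf2
    have h1s := (hasDerivAt_const t (1:ℝ)).sub hprod
    have := (hasDerivAt_pow n t).mul h1s
    simpa [csN, s, hSdef, mul_comm, mul_assoc, Pi.mul_def, Pi.sub_def] using this
  rw [hst.deriv, hV2]
  have hpow : t ^ (n - 1) * t = t ^ n := by
    rw [← pow_succ, Nat.sub_add_cancel hn]
  simp only [csN, s, hSdef]
  field_simp
  ring_nf
end

section
/- Let ε > 0, T > 0, β > 0, C₀ ≥ 0, and let b : [0,T] → ℝ satisfy b(t) ≥ β for all t. Suppose w : [0,1] × [0,T] → ℝ is continuous, the partial derivatives ∂ₜ w and ∂ₓₓ w exist on Q := (0,1) × (0,T], and w satisfies ∂ₜ w − ε ∂ₓₓ w + b(t) w = 0 on Q, together with w(x,0) = 0 for all x ∈ [0,1], w(0,t) = 0 and |w(1,t)| ≤ C₀ for all t ∈ [0,T]. Then |w(x,t)| ≤ C₀ · e^{−√(β/ε) (1 − x)} for all (x,t) ∈ [0,1] × [0,T]. -/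
open Set Filter Topology

/-- At a minimum over a left interval, the derivative is nonpositive. -/
lemma deriv_nonpos_of_min_left {f : ℝ → ℝ} {a p : ℝ} (hpa : p < a)
    (hf : DifferentiableAt ℝ f a) (hmin : ∀ y ∈ Set.Ioo p a, f a ≤ f y) :
    deriv f a ≤ 0 := by
  have h := hasDerivAt_iff_tendsto_slope.1 hf.hasDerivAt
  have h' : Tendsto (slope f a) (𝓝[<] a) (𝓝 (deriv f a)) :=
    h.mono_left (nhdsWithin_mono a (fun y hy => ne_of_lt hy))
  refine le_of_tendsto h' ?_
  filter_upwards [Ioo_mem_nhdsLT_of_mem ⟨hpa, le_refl a⟩] with y hy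
  rw [slope_def_field]
  apply div_nonpos_of_nonneg_of_nonpos
  · exact sub_nonneg.2 (hmin y hy)
  · exact sub_nonpos.2 hy.2.le

/-- At an interior minimum, the second derivative is nonneg. -/
lemma deriv_deriv_nonneg_of_min {f : ℝ → ℝ} {a p q : ℝ} (hap : p < a) (haq : a < q)
    (hf : ∀ y ∈ Set.Ioo p q, DifferentiableAt ℝ f y)
    (hf2 : DifferentiableAt ℝ (deriv f) a)
    (hmin : ∀ y ∈ Set.Ioo p q, f a ≤ f y) :
    0 ≤ deriv (deriv f) a := by
  by_contra hlt
  push_neg at hlt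
  have hmem : Set.Ioo p q ∈ 𝓝 a := Ioo_mem_nhds hap haq
  have hloc : IsLocalMin f a := by
    filter_upwards [hmem] with y hy using hmin y hy
  have hga : deriv f a = 0 := hloc.deriv_eq_zero
  have h := hasDerivAt_iff_tendsto_slope.1 hf2.hasDerivAt
  have h' : Tendsto (slope (deriv f) a) (𝓝[>] a) (𝓝 (deriv (deriv f) a)) :=
    h.mono_left (nhdsWithin_mono a (fun y hy => ne_of_gt hy))
  have hev : ∀ᶠ y in 𝓝[>] a, slope (deriv f) a y < 0 :=
    h'.eventually (eventually_lt_nhds hlt)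
  obtain ⟨u, hau, hu⟩ := mem_nhdsGT_iff_exists_Ioo_subset.1 hev
  have hau' : a < u := hau
  set d := min ((a + u) / 2) ((a + q) / 2) with hd
  have had : a < d := lt_min (by linarith) (by linarith)
  have hdu : d < u := lt_of_le_of_lt (min_le_left _ _) (by linarith)
  have hdq : d < q := lt_of_le_of_lt (min_le_right _ _) (by linarith)
  have hsub : Set.Icc a d ⊆ Set.Ioo p q := fun y hy =>
    ⟨lt_of_lt_of_le hap hy.1, lt_of_le_of_lt hy.2 hdq⟩
  have hcont : ContinuousOn f (Set.Icc a d) := fun y hy =>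
    ((hf y (hsub hy)).continuousAt).continuousWithinAt
  have hderiv : ∀ y ∈ interior (Set.Icc a d), deriv f y < 0 := by
    rw [interior_Icc]
    intro y hy
    have hslope : slope (deriv f) a y < 0 := hu ⟨hy.1, lt_trans hy.2 hdu⟩
    rw [slope_def_field, hga, sub_zero] at hslope
    rcases div_neg_iff.1 hslope with ⟨_, h2⟩ | ⟨h1, _⟩
    · linarith [sub_pos.2 hy.1]
    · exact h1
  have hanti : StrictAntiOn f (Set.Icc a d) :=
    strictAntiOn_of_deriv_neg (convex_Icc a d) hcont hderiv
  have hfd : f d < f a := hanti ⟨le_refl a, had.le⟩ ⟨had.le, le_refl d⟩ had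
  exact absurd (hmin d (hsub ⟨had.le, le_refl d⟩)) (not_le.2 hfd)

/-- Parabolic weak maximum principle on `[0,1] × [0,T]`. -/
lemma parabolic_nonneg (ε T β : ℝ) (hε : 0 < ε) (hT : 0 < T) (hβ : 0 < β)
    (b : ℝ → ℝ) (hb : ∀ t : ℝ, t ∈ Set.Icc (0:ℝ) T → β ≤ b t)
    (v : ℝ → ℝ → ℝ)
    (hc : ContinuousOn (fun p : ℝ × ℝ => v p.1 p.2) (Set.Icc (0:ℝ) 1 ×ˢ Set.Icc (0:ℝ) T))
    (hvt : ∀ x t : ℝ, x ∈ Set.Ioo (0:ℝ) 1 → t ∈ Set.Ioc (0:ℝ) T →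
      DifferentiableAt ℝ (fun τ => v x τ) t)
    (hvx : ∀ x t : ℝ, x ∈ Set.Ioo (0:ℝ) 1 → t ∈ Set.Ioc (0:ℝ) T →
      DifferentiableAt ℝ (fun ξ => v ξ t) x)
    (hvxx : ∀ x t : ℝ, x ∈ Set.Ioo (0:ℝ) 1 → t ∈ Set.Ioc (0:ℝ) T →
      DifferentiableAt ℝ (deriv (fun ξ => v ξ t)) x)
    (hineq : ∀ x t : ℝ, x ∈ Set.Ioo (0:ℝ) 1 → t ∈ Set.Ioc (0:ℝ) T →
      0 ≤ deriv (fun τ => v x τ) t - ε * deriv (deriv (fun ξ => v ξ t)) x + b t * v x t)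
    (hinit : ∀ x : ℝ, x ∈ Set.Icc (0:ℝ) 1 → 0 ≤ v x 0)
    (hl : ∀ t : ℝ, t ∈ Set.Icc (0:ℝ) T → 0 ≤ v 0 t)
    (hr : ∀ t : ℝ, t ∈ Set.Icc (0:ℝ) T → 0 ≤ v 1 t) :
    ∀ x t : ℝ, x ∈ Set.Icc (0:ℝ) 1 → t ∈ Set.Icc (0:ℝ) T → 0 ≤ v x t := by
  have hK : IsCompact (Set.Icc (0:ℝ) 1 ×ˢ Set.Icc (0:ℝ) T) :=
    isCompact_Icc.prod isCompact_Icc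
  have hne : (Set.Icc (0:ℝ) 1 ×ˢ Set.Icc (0:ℝ) T).Nonempty :=
    ⟨(0, 0), ⟨⟨le_refl 0, zero_le_one⟩, ⟨le_refl 0, hT.le⟩⟩⟩
  obtain ⟨p₀, hp₀K, hmin⟩ := hK.exists_isMinOn hne hc
  obtain ⟨x₀, t₀⟩ := p₀
  have hx₀ : x₀ ∈ Set.Icc (0:ℝ) 1 := hp₀K.1
  have ht₀ : t₀ ∈ Set.Icc (0:ℝ) T := hp₀K.2
  intro x t hx ht
  have hmin' : ∀ y s : ℝ, y ∈ Set.Icc (0:ℝ) 1 → s ∈ Set.Icc (0:ℝ) T →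
      v x₀ t₀ ≤ v y s := fun y s hy hs => hmin (Set.mk_mem_prod hy hs)
  by_contra hneg
  push_neg at hneg
  have hm : v x₀ t₀ < 0 := lt_of_le_of_lt (hmin' x t hx ht) hneg
  -- the minimum is interior
  have hx₀0 : x₀ ≠ 0 := by rintro rfl; exact absurd (hl t₀ ht₀) (not_le.2 hm)
  have hx₀1 : x₀ ≠ 1 := by rintro rfl; exact absurd (hr t₀ ht₀) (not_le.2 hm)
  have ht₀0 : t₀ ≠ 0 := by rintro rfl; exact absurd (hinit x₀ hx₀) (not_le.2 hm)
  have hx₀' : x₀ ∈ Set.Ioo (0:ℝ) 1 :=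
    ⟨lt_of_le_of_ne hx₀.1 (Ne.symm hx₀0), lt_of_le_of_ne hx₀.2 hx₀1⟩
  have ht₀' : t₀ ∈ Set.Ioc (0:ℝ) T := ⟨lt_of_le_of_ne ht₀.1 (Ne.symm ht₀0), ht₀.2⟩
  -- time derivative nonpositive
  have hdt : deriv (fun τ => v x₀ τ) t₀ ≤ 0 := by
    apply deriv_nonpos_of_min_left ht₀'.1 (hvt x₀ t₀ hx₀' ht₀')
    intro y hy
    exact hmin' x₀ y hx₀ ⟨hy.1.le, hy.2.le.trans ht₀.2⟩
  -- second space derivative nonnegative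
  have hdxx : 0 ≤ deriv (deriv (fun ξ => v ξ t₀)) x₀ := by
    apply deriv_deriv_nonneg_of_min hx₀'.1 hx₀'.2
      (fun y hy => hvx y t₀ hy ht₀') (hvxx x₀ t₀ hx₀' ht₀')
    intro y hy
    exact hmin' y t₀ ⟨hy.1.le, hy.2.le⟩ ht₀
  have hbm : b t₀ * v x₀ t₀ ≤ β * v x₀ t₀ :=
    mul_le_mul_of_nonpos_right (hb t₀ ht₀) hm.le
  have hβm : β * v x₀ t₀ < 0 := mul_neg_of_pos_of_neg hβ hm
  have := hineq x₀ t₀ hx₀' ht₀'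
  nlinarith

set_option maxHeartbeats 1000000 in
/-- Maximum-principle barrier bound for the right boundary-layer component: if
`w_t − ε w_{xx} + b(t) w = 0` on `Q = (0,1) × (0,T]` with `b ≥ β > 0`, zero initial data,
`w(0,t) = 0` and `|w(1,t)| ≤ C₀`, then `|w(x,t)| ≤ C₀ e^{−√(β/ε)(1−x)}`. -/
theorem right_layer_barrier_bound
    (ε T β C₀ : ℝ) (hε : 0 < ε) (hT : 0 < T) (hβ : 0 < β) (hC₀ : 0 ≤ C₀)
    (b : ℝ → ℝ) (hb : ∀ t : ℝ, t ∈ Set.Icc (0:ℝ) T → β ≤ b t)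
    (w : ℝ → ℝ → ℝ)
    (hw_cont : ContinuousOn (fun p : ℝ × ℝ => w p.1 p.2)
      (Set.Icc (0:ℝ) 1 ×ˢ Set.Icc (0:ℝ) T))
    (hwt : ∀ x t : ℝ, x ∈ Set.Ioo (0:ℝ) 1 → t ∈ Set.Ioc (0:ℝ) T →
      DifferentiableAt ℝ (fun τ => w x τ) t)
    (hwx : ∀ x t : ℝ, x ∈ Set.Ioo (0:ℝ) 1 → t ∈ Set.Ioc (0:ℝ) T →
      DifferentiableAt ℝ (fun ξ => w ξ t) x)
    (hwxx : ∀ x t : ℝ, x ∈ Set.Ioo (0:ℝ) 1 → t ∈ Set.Ioc (0:ℝ) T →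
      DifferentiableAt ℝ (deriv (fun ξ => w ξ t)) x)
    (hpde : ∀ x t : ℝ, x ∈ Set.Ioo (0:ℝ) 1 → t ∈ Set.Ioc (0:ℝ) T →
      deriv (fun τ => w x τ) t - ε * deriv (deriv (fun ξ => w ξ t)) x
        + b t * w x t = 0)
    (hinit : ∀ x : ℝ, x ∈ Set.Icc (0:ℝ) 1 → w x 0 = 0)
    (hleft : ∀ t : ℝ, t ∈ Set.Icc (0:ℝ) T → w 0 t = 0)
    (hright : ∀ t : ℝ, t ∈ Set.Icc (0:ℝ) T → |w 1 t| ≤ C₀) :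
    ∀ x t : ℝ, x ∈ Set.Icc (0:ℝ) 1 → t ∈ Set.Icc (0:ℝ) T →
      |w x t| ≤ C₀ * Real.exp (-Real.sqrt (β / ε) * (1 - x)) := by
  set k : ℝ := Real.sqrt (β / ε) with hk
  set φ : ℝ → ℝ := fun x => C₀ * Real.exp (-k * (1 - x)) with hφ
  have hk2 : k * k = β / ε := Real.mul_self_sqrt (div_nonneg hβ.le hε.le)
  have hφpos : ∀ x : ℝ, 0 ≤ φ x := fun x =>
    mul_nonneg hC₀ (Real.exp_pos _).le
  have hφ' : ∀ x : ℝ, HasDerivAt φ (k * φ x) x := by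
    intro x
    have h1 : HasDerivAt (fun y : ℝ => -k * (1 - y)) (-k * (-1)) x :=
      ((hasDerivAt_id x).const_sub 1).const_mul (-k)
    have h2 := (h1.exp).const_mul C₀
    refine h2.congr_deriv ?_
    simp [hφ]; ring
  have hφ'' : ∀ x : ℝ, HasDerivAt (fun y => k * φ y) (k * (k * φ x)) x :=
    fun x => (hφ' x).const_mul k
  have hφc : Continuous φ := by
    apply Continuous.mul continuous_const
    exact Real.continuous_exp.comp (by continuity)
  -- the main barrier argument, for both signs simultaneously
  have key : ∀ s : ℝ, s = 1 ∨ s = -1 →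
      ∀ x t : ℝ, x ∈ Set.Icc (0:ℝ) 1 → t ∈ Set.Icc (0:ℝ) T →
      0 ≤ φ x + s * w x t := by
    intro s hs
    set v : ℝ → ℝ → ℝ := fun x t => φ x + s * w x t with hv
    have hsabs : |s| = 1 := by rcases hs with rfl | rfl <;> simp
    -- derivative computations
    have hderx : ∀ x t : ℝ, x ∈ Set.Ioo (0:ℝ) 1 → t ∈ Set.Ioc (0:ℝ) T →
        HasDerivAt (fun ξ => v ξ t) (k * φ x + s * deriv (fun ξ => w ξ t) x) x := by
      intro x t hx ht
      exact (hφ' x).add ((hwx x t hx ht).hasDerivAt.const_mul s)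
    have hev : ∀ x t : ℝ, x ∈ Set.Ioo (0:ℝ) 1 → t ∈ Set.Ioc (0:ℝ) T →
        (fun ξ => deriv (fun ξ' => v ξ' t) ξ) =ᶠ[nhds x]
          (fun ξ => k * φ ξ + s * deriv (fun ξ' => w ξ' t) ξ) := by
      intro x t hx ht
      filter_upwards [Ioo_mem_nhds hx.1 hx.2] with ξ hξ
      exact (hderx ξ t hξ ht).deriv
    have hder2 : ∀ x t : ℝ, x ∈ Set.Ioo (0:ℝ) 1 → t ∈ Set.Ioc (0:ℝ) T →
        deriv (deriv (fun ξ => v ξ t)) x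
          = k * (k * φ x) + s * deriv (deriv (fun ξ => w ξ t)) x := by
      intro x t hx ht
      rw [(hev x t hx ht).deriv_eq]
      exact ((hφ'' x).add ((hwxx x t hx ht).hasDerivAt.const_mul s)).deriv
    apply parabolic_nonneg ε T β hε hT hβ b hb v
    · exact ((hφc.comp continuous_fst).continuousOn).add
        (continuousOn_const.mul hw_cont)
    · intro x t hx ht
      exact (differentiableAt_const _).add ((hwt x t hx ht).const_mul s)
    · intro x t hx ht
      exact (hderx x t hx ht).differentiableAt
    · intro x t hx ht
      rw [(hev x t hx ht).differentiableAt_iff]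
      exact ((hφ'' x).differentiableAt).add ((hwxx x t hx ht).const_mul s)
    · intro x t hx ht
      have hdt : deriv (fun τ => v x τ) t = s * deriv (fun τ => w x τ) t := by
        have : HasDerivAt (fun τ => v x τ) (s * deriv (fun τ => w x τ) t) t :=
          (((hwt x t hx ht).hasDerivAt.const_mul s).const_add (φ x))
        exact this.deriv
      rw [hdt, hder2 x t hx ht]
      have hpde' := hpde x t hx ht
      have hεk : ε * (k * (k * φ x)) = β * φ x := by
        rw [show k * (k * φ x) = (k * k) * φ x by ring, hk2]
        field_simp
      have hbt : β ≤ b t := hb t ⟨ht.1.le, ht.2⟩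
      have hφx : 0 ≤ φ x := hφpos x
      have hkey : s * (deriv (fun τ => w x τ) t
            - ε * deriv (deriv (fun ξ => w ξ t)) x + b t * w x t) = 0 := by
        rw [hpde']; ring
      have hnn : 0 ≤ b t * φ x - ε * (k * (k * φ x)) := by
        rw [hεk]; nlinarith
      have hveq : v x t = φ x + s * w x t := rfl
      rw [hveq]
      nlinarith [hkey, hnn]
    · intro x hx
      simp [hv, hinit x hx, hφpos x]
    · intro t ht
      simp [hv, hleft t ht, hφpos 0]
    · intro t ht
      have h1 : φ 1 = C₀ := by simp [hφ]
      have h2 : -C₀ ≤ s * w 1 t := by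
        have := abs_le.1 (hright t ht)
        rcases hs with rfl | rfl <;> simp <;> linarith [this.1, this.2]
      simp only [hv, h1]
      linarith
  intro x t hx ht
  have h1 := key 1 (Or.inl rfl) x t hx ht
  have h2 := key (-1) (Or.inr rfl) x t hx ht
  rw [abs_le]
  constructor <;> [skip; skip] <;>
    simp only [hφ, hk] at h1 h2 <;> [linarith; linarith]
end

section
/- Let ε > 0, T > 0, β ≥ 0, C₁, C₂ ≥ 0, let b : [0,T] → ℝ satisfy b(t) ≥ β for all t, and let θ satisfy θ ≥ 0 and θ > 1/(4T) − β. Suppose w : [0,1] × [0,T] → ℝ is continuous, the partial derivatives ∂ₜ w and ∂ₓₓ w exist on Q := (0,1) × (0,T], and on Q: |∂ₜ w − ε ∂ₓₓ w + b(t) w| ≤ C₁ e^{−x/(2√(ε T))}, together with w(x,0) = 0 for all x ∈ [0,1], w(1,t) = 0 and |w(0,t)| ≤ C₂ for all t ∈ [0,T]. Then, with C := max(C₂, C₁/(θ + β − 1/(4T))), one has |w(x,t)| ≤ C · e^{−x/(2√(ε T))} · e^{θ t} for all (x,t) ∈ [0,1] × [0,T]. -/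
open Set Filter Topology
set_option maxHeartbeats 1000000

/-- One-sided derivative sign at a left-interior minimum over `[a, t₀]`. -/
lemma deriv_nonpos_of_isMinOn_left {f : ℝ → ℝ} {a t₀ : ℝ} (ha : a < t₀)
    (hmin : ∀ t ∈ Set.Icc a t₀, f t₀ ≤ f t)
    (hd : DifferentiableAt ℝ f t₀) : deriv f t₀ ≤ 0 := by
  have h := hasDerivAt_iff_tendsto_slope.1 hd.hasDerivAt
  have h' : Tendsto (slope f t₀) (𝓝[<] t₀) (𝓝 (deriv f t₀)) :=
    h.mono_left (nhdsWithin_mono _ (fun y hy => ne_of_lt hy))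
  refine le_of_tendsto h' ?_
  filter_upwards [Ioo_mem_nhdsLT_of_mem (Set.mem_Ioc.2 ⟨ha, le_rfl⟩)] with t ht
  have h1 : 0 ≤ f t - f t₀ := sub_nonneg.2 (hmin t ⟨ht.1.le, ht.2.le⟩)
  have h2 : t - t₀ < 0 := sub_neg.2 ht.2
  rw [slope_def_field, div_eq_mul_inv]
  exact mul_nonpos_of_nonneg_of_nonpos h1 (inv_nonpos.2 h2.le)

/-- Second-derivative sign at an interior local minimum. -/
lemma deriv_deriv_nonneg_of_isLocalMin {f : ℝ → ℝ} {x₀ : ℝ}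
    (hx : x₀ ∈ Set.Ioo (0:ℝ) 1)
    (hdf : ∀ x ∈ Set.Ioo (0:ℝ) 1, DifferentiableAt ℝ f x)
    (hmin : IsLocalMin f x₀)
    (hdd : DifferentiableAt ℝ (deriv f) x₀) : 0 ≤ deriv (deriv f) x₀ := by
  by_contra hneg
  push_neg at hneg
  have hg0 : deriv f x₀ = 0 := hmin.deriv_eq_zero
  have h := hasDerivAt_iff_tendsto_slope.1 hdd.hasDerivAt
  have h' : Tendsto (slope (deriv f) x₀) (𝓝[>] x₀) (𝓝 (deriv (deriv f) x₀)) :=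
    h.mono_left (nhdsWithin_mono _ (fun y hy => ne_of_gt hy))
  have hev : ∀ᶠ y in 𝓝[>] x₀, slope (deriv f) x₀ y < 0 :=
    h'.eventually (eventually_lt_nhds hneg)
  have hev2 : ∀ᶠ y in 𝓝[>] x₀, deriv f y < 0 := by
    filter_upwards [hev, self_mem_nhdsWithin] with y hy hy'
    rw [slope_def_field, hg0, sub_zero] at hy
    have hyx : 0 < y - x₀ := sub_pos.2 hy'
    by_contra hcon
    push_neg at hcon
    exact absurd (div_nonneg hcon hyx.le) (not_le.2 hy)
  have hev3 : ∀ᶠ y in 𝓝[>] x₀, y ∈ Set.Ioo (0:ℝ) 1 :=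
    eventually_nhdsWithin_of_eventually_nhds (isOpen_Ioo.eventually_mem hx)
  have hev4 : ∀ᶠ y in 𝓝[>] x₀, f x₀ ≤ f y :=
    eventually_nhdsWithin_of_eventually_nhds hmin
  obtain ⟨u, hu, hsub⟩ := mem_nhdsGT_iff_exists_Ioo_subset.1
    ((hev2.and (hev3.and hev4)).mono (fun y hy => hy) : _)
  set m := (x₀ + u) / 2 with hm
  have hxm : x₀ < m := by simp only [hm]; linarith [Set.mem_Ioi.1 hu]
  have hmu : m < u := by simp only [hm]; linarith [Set.mem_Ioi.1 hu]
  have hIcc : Set.Icc x₀ m ⊆ Set.Ioo (0:ℝ) 1 := by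
    intro y hy
    rcases eq_or_lt_of_le hy.1 with rfl | hlt
    · exact hx
    · exact (hsub ⟨hlt, lt_of_le_of_lt hy.2 hmu⟩).2.1
  have hanti : StrictAntiOn f (Set.Icc x₀ m) := by
    apply strictAntiOn_of_deriv_neg (convex_Icc _ _)
    · exact fun y hy => (hdf y (hIcc hy)).continuousAt.continuousWithinAt
    · intro y hy
      rw [interior_Icc] at hy
      exact (hsub ⟨hy.1, lt_trans hy.2 hmu⟩).1
  have hlt : f m < f x₀ := hanti ⟨le_rfl, hxm.le⟩ ⟨hxm.le, le_rfl⟩ hxm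
  exact absurd (hsub ⟨hxm, hmu⟩).2.2 (not_le.2 hlt)

/-- Weak parabolic minimum principle with strict positivity of the operator. -/
lemma parabolic_min_principle (ε T : ℝ) (hε : 0 ≤ ε) (hT : 0 < T)
    (c : ℝ → ℝ) (hc : ∀ t ∈ Set.Icc (0:ℝ) T, 0 ≤ c t)
    (u : ℝ → ℝ → ℝ)
    (hcont : ContinuousOn (fun p : ℝ × ℝ => u p.1 p.2) (Set.Icc (0:ℝ) 1 ×ˢ Set.Icc (0:ℝ) T))
    (hut : ∀ x ∈ Set.Ioo (0:ℝ) 1, ∀ t ∈ Set.Ioc (0:ℝ) T, DifferentiableAt ℝ (fun τ => u x τ) t)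
    (hux : ∀ x ∈ Set.Ioo (0:ℝ) 1, ∀ t ∈ Set.Ioc (0:ℝ) T, DifferentiableAt ℝ (fun ξ => u ξ t) x)
    (huxx : ∀ x ∈ Set.Ioo (0:ℝ) 1, ∀ t ∈ Set.Ioc (0:ℝ) T,
      DifferentiableAt ℝ (deriv (fun ξ => u ξ t)) x)
    (hL : ∀ x ∈ Set.Ioo (0:ℝ) 1, ∀ t ∈ Set.Ioc (0:ℝ) T,
      0 < deriv (fun τ => u x τ) t - ε * deriv (deriv (fun ξ => u ξ t)) x + c t * u x t)
    (h0 : ∀ x ∈ Set.Icc (0:ℝ) 1, 0 ≤ u x 0)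
    (hleft : ∀ t ∈ Set.Icc (0:ℝ) T, 0 ≤ u 0 t)
    (hright : ∀ t ∈ Set.Icc (0:ℝ) T, 0 ≤ u 1 t) :
    ∀ x ∈ Set.Icc (0:ℝ) 1, ∀ t ∈ Set.Icc (0:ℝ) T, 0 ≤ u x t := by
  set K : Set (ℝ × ℝ) := Set.Icc (0:ℝ) 1 ×ˢ Set.Icc (0:ℝ) T with hK
  have hKc : IsCompact K := (isCompact_Icc).prod isCompact_Icc
  have hKne : K.Nonempty := ⟨(0, 0), ⟨⟨le_rfl, zero_le_one⟩, ⟨le_rfl, hT.le⟩⟩⟩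
  obtain ⟨p₀, hp₀K, hp₀⟩ := hKc.exists_isMinOn hKne hcont
  intro x hx t ht
  rcases le_or_gt 0 (u p₀.1 p₀.2) with hpos | hneg
  · exact le_trans hpos (hp₀ (Set.mk_mem_prod hx ht))
  exfalso
  obtain ⟨⟨hx0, hx1⟩, ⟨ht0, ht1⟩⟩ := hp₀K
  set x₀ := p₀.1
  set t₀ := p₀.2
  have hmin : ∀ q ∈ K, u x₀ t₀ ≤ u q.1 q.2 := fun q hq => hp₀ hq
  have hx0' : 0 < x₀ := by
    rcases eq_or_lt_of_le hx0 with heq | h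
    · exact absurd hneg (not_lt.2 (heq ▸ hleft t₀ ⟨ht0, ht1⟩))
    · exact h
  have hx1' : x₀ < 1 := by
    rcases eq_or_lt_of_le hx1 with heq | h
    · exact absurd hneg (not_lt.2 (heq ▸ hright t₀ ⟨ht0, ht1⟩))
    · exact h
  have ht0' : 0 < t₀ := by
    rcases eq_or_lt_of_le ht0 with heq | h
    · exact absurd hneg (not_lt.2 (heq ▸ h0 x₀ ⟨hx0, hx1⟩))
    · exact h
  have hxI : x₀ ∈ Set.Ioo (0:ℝ) 1 := ⟨hx0', hx1'⟩
  have htI : t₀ ∈ Set.Ioc (0:ℝ) T := ⟨ht0', ht1⟩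
  have hdt : deriv (fun τ => u x₀ τ) t₀ ≤ 0 := by
    apply deriv_nonpos_of_isMinOn_left ht0'
    · intro t htt
      exact hmin (x₀, t) (Set.mk_mem_prod ⟨hx0, hx1⟩ ⟨htt.1, le_trans htt.2 ht1⟩)
    · exact hut x₀ hxI t₀ htI
  have hdxx : 0 ≤ deriv (deriv (fun ξ => u ξ t₀)) x₀ := by
    apply deriv_deriv_nonneg_of_isLocalMin hxI
    · exact fun y hy => hux y hy t₀ htI
    · apply IsMinOn.isLocalMin (s := Set.Icc (0:ℝ) 1)
      · intro y hy
        exact hmin (y, t₀) (Set.mk_mem_prod hy ⟨ht0, ht1⟩)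
      · exact Icc_mem_nhds hx0' hx1'
    · exact huxx x₀ hxI t₀ htI
  have hcu : c t₀ * u x₀ t₀ ≤ 0 :=
    mul_nonpos_of_nonneg_of_nonpos (hc t₀ ⟨ht0, ht1⟩) hneg.le
  have := hL x₀ hxI t₀ htI
  linarith [mul_nonneg hε hdxx]

/-- Maximum-principle barrier bound for the left boundary-layer component: if
`|w_t − ε w_{xx} + b(t) w| ≤ C₁ e^{−x/(2√(εT))}` on `Q = (0,1) × (0,T]` with `b ≥ β ≥ 0`,
zero initial data, `w(1,t) = 0`, `|w(0,t)| ≤ C₂`, and `θ ≥ 0`, `θ > 1/(4T) − β`, then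
`|w(x,t)| ≤ C e^{−x/(2√(εT))} e^{θ t}` with `C = max(C₂, C₁/(θ + β − 1/(4T)))`. -/
theorem left_layer_barrier_bound
    (ε T β C₁ C₂ θ : ℝ) (hε : 0 < ε) (hT : 0 < T) (hβ : 0 ≤ β)
    (hC₁ : 0 ≤ C₁) (hC₂ : 0 ≤ C₂) (hθ0 : 0 ≤ θ) (hθ : 1 / (4 * T) - β < θ)
    (b : ℝ → ℝ) (hb : ∀ t : ℝ, t ∈ Set.Icc (0:ℝ) T → β ≤ b t)
    (w : ℝ → ℝ → ℝ)
    (hw_cont : ContinuousOn (fun p : ℝ × ℝ => w p.1 p.2)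
      (Set.Icc (0:ℝ) 1 ×ˢ Set.Icc (0:ℝ) T))
    (hwt : ∀ x t : ℝ, x ∈ Set.Ioo (0:ℝ) 1 → t ∈ Set.Ioc (0:ℝ) T →
      DifferentiableAt ℝ (fun τ => w x τ) t)
    (hwx : ∀ x t : ℝ, x ∈ Set.Ioo (0:ℝ) 1 → t ∈ Set.Ioc (0:ℝ) T →
      DifferentiableAt ℝ (fun ξ => w ξ t) x)
    (hwxx : ∀ x t : ℝ, x ∈ Set.Ioo (0:ℝ) 1 → t ∈ Set.Ioc (0:ℝ) T →
      DifferentiableAt ℝ (deriv (fun ξ => w ξ t)) x)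
    (hpde : ∀ x t : ℝ, x ∈ Set.Ioo (0:ℝ) 1 → t ∈ Set.Ioc (0:ℝ) T →
      |deriv (fun τ => w x τ) t - ε * deriv (deriv (fun ξ => w ξ t)) x
        + b t * w x t| ≤ C₁ * Real.exp (-x / (2 * Real.sqrt (ε * T))))
    (hinit : ∀ x : ℝ, x ∈ Set.Icc (0:ℝ) 1 → w x 0 = 0)
    (hright : ∀ t : ℝ, t ∈ Set.Icc (0:ℝ) T → w 1 t = 0)
    (hleft : ∀ t : ℝ, t ∈ Set.Icc (0:ℝ) T → |w 0 t| ≤ C₂) :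
    ∀ x t : ℝ, x ∈ Set.Icc (0:ℝ) 1 → t ∈ Set.Icc (0:ℝ) T →
      |w x t| ≤ max C₂ (C₁ / (θ + β - 1 / (4 * T))) *
        Real.exp (-x / (2 * Real.sqrt (ε * T))) * Real.exp (θ * t) := by
  set sl := 2 * Real.sqrt (ε * T) with hsl_def
  have hεT : (0:ℝ) < ε * T := mul_pos hε hT
  have hsl : 0 < sl := by
    rw [hsl_def]; positivity
  have hsl2 : sl * sl = 4 * (ε * T) := by
    rw [hsl_def]
    linear_combination (4:ℝ) * Real.mul_self_sqrt hεT.le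
  have hsl4 : ε * (1 / sl * (1 / sl)) = 1 / (4 * T) := by
    have h1 : (1:ℝ) / sl * (1 / sl) = 1 / (sl * sl) := by ring
    rw [h1, hsl2]
    field_simp
  set D := θ + β - 1 / (4 * T) with hD_def
  have hD : 0 < D := by rw [hD_def]; linarith
  set C := max C₂ (C₁ / D) with hC_def
  have hC2C : C₂ ≤ C := le_max_left _ _
  have hC0 : 0 ≤ C := le_trans hC₂ hC2C
  have hCD : C₁ ≤ C * D := by
    have := le_max_right C₂ (C₁ / D)
    calc C₁ = C₁ / D * D := by field_simp
      _ ≤ C * D := mul_le_mul_of_nonneg_right this hD.le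
  -- derivative of the exponential barrier in x
  have hE : ∀ y : ℝ, HasDerivAt (fun ξ : ℝ => Real.exp (-ξ / sl))
      (-(1 / sl) * Real.exp (-y / sl)) y := by
    intro y
    have h1 : HasDerivAt (fun ξ : ℝ => -ξ / sl) (-(1 / sl)) y := by
      have := ((hasDerivAt_id y).neg).div_const sl
      simpa [neg_div] using this
    have := h1.exp
    simpa [mul_comm] using this
  -- key barrier inequality for each sign and each σ > 0
  have key : ∀ sgn : ℝ, |sgn| = 1 → ∀ σ : ℝ, 0 < σ →
      ∀ x ∈ Set.Icc (0:ℝ) 1, ∀ t ∈ Set.Icc (0:ℝ) T,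
      0 ≤ C * Real.exp (-x / sl) * Real.exp (θ * t) + sgn * w x t + σ * t := by
    intro sgn hsgn σ hσ
    have habs : ∀ a : ℝ, |sgn * a| = |a| := by
      intro a; rw [abs_mul, hsgn, one_mul]
    apply parabolic_min_principle ε T hε.le hT b
      (fun t htt => le_trans hβ (hb t htt))
      (fun x t => C * Real.exp (-x / sl) * Real.exp (θ * t) + sgn * w x t + σ * t)
    -- continuity
    · apply ContinuousOn.add
      apply ContinuousOn.add
      · exact Continuous.continuousOn (by fun_prop)
      · exact continuousOn_const.mul hw_cont
      · exact Continuous.continuousOn (by fun_prop)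
    -- time differentiability
    · intro x hx t ht
      have h1 : HasDerivAt (fun τ => C * Real.exp (-x / sl) * Real.exp (θ * τ))
          (C * Real.exp (-x / sl) * (Real.exp (θ * t) * θ)) t := by
        have hexp : HasDerivAt (fun τ : ℝ => Real.exp (θ * τ)) (Real.exp (θ * t) * θ) t := by
          simpa [mul_comm] using (((hasDerivAt_id t).const_mul θ).exp)
        exact hexp.const_mul _
      have h2 := ((hwt x t hx ht).hasDerivAt.const_mul sgn)
      have h3 := (hasDerivAt_id t).const_mul σ
      exact ((h1.add h2).add h3).differentiableAt
    -- space differentiability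
    · intro x hx t ht
      have h1 := ((hE x).const_mul C).mul_const (Real.exp (θ * t))
      have h2 := ((hwx x t hx ht).hasDerivAt.const_mul sgn)
      exact ((h1.add h2).add_const (σ * t)).differentiableAt
    -- second space differentiability
    · intro x hx t ht
      have heq : deriv (fun ξ => C * Real.exp (-ξ / sl) * Real.exp (θ * t) + sgn * w ξ t + σ * t)
          =ᶠ[𝓝 x] fun y => C * (-(1 / sl) * Real.exp (-y / sl)) * Real.exp (θ * t)
            + sgn * deriv (fun ξ => w ξ t) y := by
        filter_upwards [isOpen_Ioo.mem_nhds hx] with y hy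
        have h1 := ((hE y).const_mul C).mul_const (Real.exp (θ * t))
        have h2 := ((hwx y t hy ht).hasDerivAt.const_mul sgn)
        exact ((h1.add h2).add_const (σ * t)).deriv
      have hD1 : HasDerivAt (fun y => C * (-(1 / sl) * Real.exp (-y / sl)) * Real.exp (θ * t)
          + sgn * deriv (fun ξ => w ξ t) y)
          (C * (-(1 / sl) * (-(1 / sl) * Real.exp (-x / sl))) * Real.exp (θ * t)
            + sgn * deriv (deriv (fun ξ => w ξ t)) x) x := by
        have h1 := (((hE x).const_mul (-(1 / sl))).const_mul C).mul_const (Real.exp (θ * t))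
        have h2 := ((hwxx x t hx ht).hasDerivAt.const_mul sgn)
        exact h1.add h2
      exact hD1.differentiableAt.congr_of_eventuallyEq heq
    -- strict positivity of the operator
    · intro x hx t ht
      have hbt : β ≤ b t := hb t ⟨ht.1.le, ht.2⟩
      have ht0 : 0 ≤ t := ht.1.le
      -- time derivative value
      have hdt : deriv (fun τ => C * Real.exp (-x / sl) * Real.exp (θ * τ) + sgn * w x τ + σ * τ) t
          = C * Real.exp (-x / sl) * (Real.exp (θ * t) * θ)
            + sgn * deriv (fun τ => w x τ) t + σ * 1 := by
        have h1 : HasDerivAt (fun τ => C * Real.exp (-x / sl) * Real.exp (θ * τ))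
            (C * Real.exp (-x / sl) * (Real.exp (θ * t) * θ)) t := by
          have hexp : HasDerivAt (fun τ : ℝ => Real.exp (θ * τ)) (Real.exp (θ * t) * θ) t := by
            simpa [mul_comm] using (((hasDerivAt_id t).const_mul θ).exp)
          exact hexp.const_mul _
        have h2 := ((hwt x t hx ht).hasDerivAt.const_mul sgn)
        have h3 := (hasDerivAt_id t).const_mul σ
        exact ((h1.add h2).add h3).deriv
      -- second space derivative value
      have heq : deriv (fun ξ => C * Real.exp (-ξ / sl) * Real.exp (θ * t) + sgn * w ξ t + σ * t)
          =ᶠ[𝓝 x] fun y => C * (-(1 / sl) * Real.exp (-y / sl)) * Real.exp (θ * t)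
            + sgn * deriv (fun ξ => w ξ t) y := by
        filter_upwards [isOpen_Ioo.mem_nhds hx] with y hy
        have h1 := ((hE y).const_mul C).mul_const (Real.exp (θ * t))
        have h2 := ((hwx y t hy ht).hasDerivAt.const_mul sgn)
        exact ((h1.add h2).add_const (σ * t)).deriv
      have hD1 : HasDerivAt (fun y => C * (-(1 / sl) * Real.exp (-y / sl)) * Real.exp (θ * t)
          + sgn * deriv (fun ξ => w ξ t) y)
          (C * (-(1 / sl) * (-(1 / sl) * Real.exp (-x / sl))) * Real.exp (θ * t)
            + sgn * deriv (deriv (fun ξ => w ξ t)) x) x := by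
        have h1 := (((hE x).const_mul (-(1 / sl))).const_mul C).mul_const (Real.exp (θ * t))
        have h2 := ((hwxx x t hx ht).hasDerivAt.const_mul sgn)
        exact h1.add h2
      have hdxx : deriv (deriv (fun ξ =>
          C * Real.exp (-ξ / sl) * Real.exp (θ * t) + sgn * w ξ t + σ * t)) x
          = C * (-(1 / sl) * (-(1 / sl) * Real.exp (-x / sl))) * Real.exp (θ * t)
            + sgn * deriv (deriv (fun ξ => w ξ t)) x := by
        rw [heq.deriv_eq]
        exact hD1.deriv
      rw [hdt, hdxx]
      set Ex := Real.exp (-x / sl) with hEx_def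
      set et := Real.exp (θ * t) with het_def
      have hExpos : 0 < Ex := Real.exp_pos _
      have het1 : 1 ≤ et := Real.one_le_exp (mul_nonneg hθ0 ht0)
      set wt := deriv (fun τ => w x τ) t
      set wxx := deriv (deriv (fun ξ => w ξ t)) x
      set wv := w x t
      have hP : |wt - ε * wxx + b t * wv| ≤ C₁ * Ex := hpde x t hx ht
      have hP' : -(C₁ * Ex) ≤ sgn * (wt - ε * wxx + b t * wv) := by
        have := neg_abs_le (sgn * (wt - ε * wxx + b t * wv))
        rw [abs_mul, hsgn, one_mul] at this
        linarith
      have hA : C * Ex * (et * θ) + sgn * wt + σ * 1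
          - ε * (C * (-(1 / sl) * (-(1 / sl) * Ex)) * et
            + sgn * wxx)
          + b t * (C * Ex * et + sgn * wv + σ * t)
          = C * Ex * et * (θ + b t - 1 / (4 * T))
            + sgn * (wt - ε * wxx + b t * wv) + σ * (1 + b t * t) := by
        linear_combination (-(C * Ex * et)) * hsl4
      have hterm1 : C₁ * Ex ≤ C * Ex * et * (θ + b t - 1 / (4 * T)) := by
        have hDle : D ≤ θ + b t - 1 / (4 * T) := by rw [hD_def]; linarith
        have h1 : C₁ * Ex ≤ C * D * Ex := mul_le_mul_of_nonneg_right hCD hExpos.le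
        have h2 : C * Ex * 1 * D ≤ C * Ex * et * D := by
          have := mul_le_mul_of_nonneg_left het1 (mul_nonneg hC0 hExpos.le)
          nlinarith
        have h3 : C * Ex * et * D ≤ C * Ex * et * (θ + b t - 1 / (4 * T)) := by
          have hnn : 0 ≤ C * Ex * et := by positivity
          exact mul_le_mul_of_nonneg_left hDle hnn
        calc C₁ * Ex ≤ C * D * Ex := h1
          _ = C * Ex * 1 * D := by ring
          _ ≤ C * Ex * et * D := h2
          _ ≤ C * Ex * et * (θ + b t - 1 / (4 * T)) := h3
      have hterm3 : σ ≤ σ * (1 + b t * t) := by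
        have : 0 ≤ b t * t := mul_nonneg (le_trans hβ hbt) ht0
        nlinarith
      rw [hA]
      linarith
    -- initial data
    · intro x hx
      rw [hinit x hx]
      simp only [mul_zero, add_zero, Real.exp_zero, mul_one]
      positivity
    -- left boundary
    · intro t htt
      have h1 : |w 0 t| ≤ C₂ := hleft t htt
      have h2 : -(C₂) ≤ sgn * w 0 t := by
        have := neg_abs_le (sgn * w 0 t)
        rw [abs_mul, hsgn, one_mul] at this
        linarith
      have het1 : 1 ≤ Real.exp (θ * t) := Real.one_le_exp (mul_nonneg hθ0 htt.1)
      have h3 : C ≤ C * Real.exp (θ * t) := le_mul_of_one_le_right hC0 het1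
      have h4 : 0 ≤ σ * t := mul_nonneg hσ.le htt.1
      have h5 : Real.exp (-(0:ℝ) / sl) = 1 := by norm_num
      rw [h5]
      linarith
    -- right boundary
    · intro t htt
      rw [hright t htt]
      have h4 : 0 ≤ σ * t := mul_nonneg hσ.le htt.1
      have : 0 ≤ C * Real.exp (-(1:ℝ) / sl) * Real.exp (θ * t) := by positivity
      simp only [mul_zero, add_zero]
      linarith
  -- pass to the limit σ → 0 and combine both signs
  intro x t hx ht
  have main : ∀ sgn : ℝ, |sgn| = 1 →
      0 ≤ C * Real.exp (-x / sl) * Real.exp (θ * t) + sgn * w x t := by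
    intro sgn hsgn
    by_contra hcon
    push_neg at hcon
    set a := -(C * Real.exp (-x / sl) * Real.exp (θ * t) + sgn * w x t) with ha_def
    have ha : 0 < a := by rw [ha_def]; linarith
    have hσ : 0 < a / (2 * T) := by positivity
    have := key sgn hsgn (a / (2 * T)) hσ x hx t ht
    have hst : a / (2 * T) * t ≤ a / (2 * T) * T := mul_le_mul_of_nonneg_left ht.2 hσ.le
    have hTT : a / (2 * T) * T = a / 2 := by field_simp
    rw [hTT] at hst
    have : 0 ≤ -a + a / 2 := by
      have := key sgn hsgn (a / (2 * T)) hσ x hx t ht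
      rw [ha_def] at *
      linarith
    linarith
  have hpos := main 1 (by norm_num)
  have hneg := main (-1) (by norm_num)
  rw [abs_le]
  constructor
  · nlinarith [hpos]
  · nlinarith [hneg]
end

section
/- Let ε > 0, T > 0, d ∈ ℝ, κ ∈ ℝ, L ≥ 0, and let b : [0,T] → ℝ satisfy b₀ := b(0) ≥ 0 and |b(t) − b(0)| ≤ L t for all t ∈ [0,T]. Define R(x,t) := (b(t) − b(0)) · (κ/2) · (e^{−b₀ t} sgn(x − d) − s(x − d, t)), where sgn(0) := 0. Then for all x ∈ ℝ and 0 < t ≤ T, |R(x,t)| ≤ (|κ| L / 2) · e^{1/4} · t · e^{−|x − d|/(2√(ε T))}. -/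
open MeasureTheory Set

lemma gauss_integrable : Integrable (fun x : ℝ => Real.exp (-x ^ 2)) := by
  simpa using integrable_exp_neg_mul_sq one_pos

lemma gauss_Ioi_zero : ∫ r in Set.Ioi (0:ℝ), Real.exp (-r ^ 2) = Real.sqrt Real.pi / 2 := by
  simpa using integral_gaussian_Ioi 1

lemma gauss_tail_le (z : ℝ) (hz : 0 ≤ z) :
    ∫ r in Set.Ioi z, Real.exp (-r ^ 2) ≤ Real.exp (-z ^ 2) * (Real.sqrt Real.pi / 2) := by
  have htrans : ∫ r in Set.Ioi z, Real.exp (-r ^ 2)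
      = ∫ u in Set.Ioi (0:ℝ), Real.exp (-(u + z) ^ 2) := by
    rw [← integral_indicator measurableSet_Ioi, ← integral_indicator measurableSet_Ioi,
      ← integral_add_right_eq_self ((Set.Ioi z).indicator fun r => Real.exp (-r ^ 2)) z]
    congr 1
    ext u
    by_cases h : 0 < u
    · rw [Set.indicator_of_mem (by simpa using h), Set.indicator_of_mem (by simpa using h)]
    · rw [Set.indicator_of_notMem (by simpa using h), Set.indicator_of_notMem (by simpa using h)]
  rw [htrans]
  have hint : Integrable (fun u : ℝ => Real.exp (-(u + z) ^ 2)) := by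
    simpa using gauss_integrable.comp_add_right z
  calc ∫ u in Set.Ioi (0:ℝ), Real.exp (-(u + z) ^ 2)
      ≤ ∫ u in Set.Ioi (0:ℝ), Real.exp (-z ^ 2) * Real.exp (-u ^ 2) := by
        refine setIntegral_mono_on hint.integrableOn
          ((gauss_integrable.const_mul _).integrableOn) measurableSet_Ioi ?_
        intro u hu
        rw [← Real.exp_add]
        apply Real.exp_le_exp.2
        nlinarith [Set.mem_Ioi.1 hu]
    _ = Real.exp (-z ^ 2) * (Real.sqrt Real.pi / 2) := by
        rw [integral_const_mul, gauss_Ioi_zero]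

lemma erf_tail (z : ℝ) (hz : 0 ≤ z) : |1 - erf z| ≤ Real.exp (-z ^ 2) := by
  have hsplit : ∫ r in Set.Ioi (0:ℝ), Real.exp (-r ^ 2)
      = (∫ r in Set.Ioc 0 z, Real.exp (-r ^ 2)) + ∫ r in Set.Ioi z, Real.exp (-r ^ 2) := by
    rw [← setIntegral_union (Set.Ioc_disjoint_Ioi le_rfl) measurableSet_Ioi
      gauss_integrable.integrableOn gauss_integrable.integrableOn,
      Set.Ioc_union_Ioi_eq_Ioi hz]
  have hIoc : (∫ r in (0:ℝ)..z, Real.exp (-r ^ 2)) = ∫ r in Set.Ioc 0 z, Real.exp (-r ^ 2) :=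
    intervalIntegral.integral_of_le hz
  have hsp : 0 < Real.sqrt Real.pi := Real.sqrt_pos.2 Real.pi_pos
  have key : 1 - erf z = 2 / Real.sqrt Real.pi * ∫ r in Set.Ioi z, Real.exp (-r ^ 2) := by
    have := hsplit
    rw [gauss_Ioi_zero] at this
    rw [erf, hIoc]
    field_simp
    linarith [this]
  have hnn : 0 ≤ ∫ r in Set.Ioi z, Real.exp (-r ^ 2) :=
    setIntegral_nonneg measurableSet_Ioi fun r _ => (Real.exp_pos _).le
  rw [key, abs_of_nonneg (by positivity)]
  calc 2 / Real.sqrt Real.pi * ∫ r in Set.Ioi z, Real.exp (-r ^ 2)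
      ≤ 2 / Real.sqrt Real.pi * (Real.exp (-z ^ 2) * (Real.sqrt Real.pi / 2)) := by
        exact mul_le_mul_of_nonneg_left (gauss_tail_le z hz) (by positivity)
    _ = Real.exp (-z ^ 2) := by field_simp

lemma erf_neg (z : ℝ) : erf (-z) = - erf z := by
  unfold erf
  have : (∫ r in (0:ℝ)..(-z), Real.exp (-r ^ 2))
      = ∫ r in (0:ℝ)..(-z), Real.exp (-(-r) ^ 2) := by simp
  rw [this, intervalIntegral.integral_comp_neg (fun r => Real.exp (-r ^ 2))]
  rw [neg_neg, neg_zero, intervalIntegral.integral_symm]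
  ring

lemma sign_sub_erf (y w : ℝ) (hw : 0 < w) :
    |Real.sign y - erf (y / w)| ≤ Real.exp (-(y / w) ^ 2) := by
  rcases lt_trichotomy y 0 with h | h | h
  · rw [Real.sign_of_neg h]
    have h1 : (-1 : ℝ) - erf (y / w) = -(1 - erf (-(y / w))) := by rw [erf_neg]; ring
    rw [h1, abs_neg]
    have := erf_tail (-(y / w)) (by have := div_neg_of_neg_of_pos h hw; linarith)
    simpa using this
  · simp [h, Real.sign_zero, erf, Real.exp_nonneg]
  · rw [Real.sign_of_pos h]
    exact erf_tail _ (by positivity)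

/-- Bound on the right-hand side `R(x,t) = (b(t) − b(0)) (κ/2) (e^{−b₀ t} sgn(x−d) − s(x−d,t))`
of the interior-layer equation:
`|R(x,t)| ≤ (|κ| L / 2) e^{1/4} t e^{−|x−d|/(2√(εT))}` for all `x` and `0 < t ≤ T`. -/
theorem interior_layer_source_bound
    (ε T d κ L : ℝ) (hε : 0 < ε) (hT : 0 < T) (hL : 0 ≤ L)
    (b : ℝ → ℝ) (hb0 : 0 ≤ b 0)
    (hbLip : ∀ t : ℝ, t ∈ Set.Icc (0:ℝ) T → |b t - b 0| ≤ L * t) :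
    ∀ x t : ℝ, 0 < t → t ≤ T →
      |(b t - b 0) * (κ / 2) *
          (Real.exp (-(b 0) * t) * Real.sign (x - d) - s ε (b 0) (x - d) t)|
        ≤ |κ| * L / 2 * Real.exp (1 / 4) * t *
            Real.exp (-|x - d| / (2 * Real.sqrt (ε * T))) := by
  intro x t ht htT
  set y : ℝ := x - d with hy
  have hst : 0 < Real.sqrt (ε * t) := Real.sqrt_pos.2 (by positivity)
  have hsT : 0 < Real.sqrt (ε * T) := Real.sqrt_pos.2 (by positivity)
  set z : ℝ := y / (2 * Real.sqrt (ε * t)) with hz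
  -- key pointwise bound
  have hD : |Real.exp (-(b 0) * t) * Real.sign y - s ε (b 0) y t|
      ≤ Real.exp (1 / 4) * Real.exp (-|y| / (2 * Real.sqrt (ε * T))) := by
    have hfac : Real.exp (-(b 0) * t) * Real.sign y - s ε (b 0) y t
        = Real.exp (-(b 0) * t) * (Real.sign y - erf z) := by
      rw [s]; ring
    rw [hfac, abs_mul, abs_of_pos (Real.exp_pos _)]
    have he1 : Real.exp (-(b 0) * t) ≤ 1 := by
      apply Real.exp_le_one_iff.2
      nlinarith
    have h2 : |Real.sign y - erf z| ≤ Real.exp (-z ^ 2) :=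
      sign_sub_erf y (2 * Real.sqrt (ε * t)) (by positivity)
    have h3 : Real.exp (-z ^ 2) ≤ Real.exp (1 / 4) * Real.exp (-|z|) := by
      rw [← Real.exp_add]
      apply Real.exp_le_exp.2
      nlinarith [sq_abs z, sq_nonneg (|z| - 1 / 2)]
    have habs : |z| = |y| / (2 * Real.sqrt (ε * t)) := by
      rw [hz, abs_div, abs_of_pos (by positivity : (0:ℝ) < 2 * Real.sqrt (ε * t))]
    have h4 : Real.exp (-|z|) ≤ Real.exp (-|y| / (2 * Real.sqrt (ε * T))) := by
      apply Real.exp_le_exp.2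
      rw [habs, neg_div, neg_le_neg_iff]
      apply div_le_div_of_nonneg_left (abs_nonneg y) (by positivity)
      have : Real.sqrt (ε * t) ≤ Real.sqrt (ε * T) :=
        Real.sqrt_le_sqrt (by nlinarith)
      linarith
    calc Real.exp (-(b 0) * t) * |Real.sign y - erf z|
        ≤ 1 * Real.exp (-z ^ 2) :=
          mul_le_mul he1 h2 (abs_nonneg _) zero_le_one
      _ = Real.exp (-z ^ 2) := one_mul _
      _ ≤ Real.exp (1 / 4) * Real.exp (-|z|) := h3
      _ ≤ Real.exp (1 / 4) * Real.exp (-|y| / (2 * Real.sqrt (ε * T))) := by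
          exact mul_le_mul_of_nonneg_left h4 (Real.exp_pos _).le
  have hb := hbLip t ⟨ht.le, htT⟩
  calc |(b t - b 0) * (κ / 2) * (Real.exp (-(b 0) * t) * Real.sign y - s ε (b 0) y t)|
      = |b t - b 0| * (|κ| / 2) * |Real.exp (-(b 0) * t) * Real.sign y - s ε (b 0) y t| := by
        rw [abs_mul, abs_mul, abs_div, abs_two]
    _ ≤ (L * t) * (|κ| / 2) *
          (Real.exp (1 / 4) * Real.exp (-|y| / (2 * Real.sqrt (ε * T)))) := by
        apply mul_le_mul _ hD (abs_nonneg _) (by positivity)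
        exact mul_le_mul_of_nonneg_right hb (by positivity)
    _ = |κ| * L / 2 * Real.exp (1 / 4) * t * Real.exp (-|y| / (2 * Real.sqrt (ε * T))) := by
        ring
end

section
/- There exists an absolute constant C > 0 (independent of ε, b₀ and T) such that for every ε > 0, b₀ ≥ 0, T > 0, every x ≥ 0 and every t with 0 < t ≤ T, the function s₂(x,t) := t² s(x,t) satisfies ε² |∂ₓ⁴ s₂(x,t)| ≤ C · e^{−x/(2√(ε T))}. -/
/-- `s₂(x,t) := t² s(x,t)`. -/
noncomputable def s₂ (ε b₀ x t : ℝ) : ℝ := t ^ 2 * s ε b₀ x t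

noncomputable def ef1 (z : ℝ) : ℝ := 2 / Real.sqrt Real.pi * Real.exp (-z ^ 2)
noncomputable def ef2 (z : ℝ) : ℝ := 2 / Real.sqrt Real.pi * (-2 * z) * Real.exp (-z ^ 2)
noncomputable def ef3 (z : ℝ) : ℝ := 2 / Real.sqrt Real.pi * (4 * z ^ 2 - 2) * Real.exp (-z ^ 2)
noncomputable def ef4 (z : ℝ) : ℝ :=
  2 / Real.sqrt Real.pi * (12 * z - 8 * z ^ 3) * Real.exp (-z ^ 2)

lemma hasDerivAt_negsq_exp (z : ℝ) :
    HasDerivAt (fun y : ℝ => Real.exp (-y ^ 2)) (-2 * z * Real.exp (-z ^ 2)) z := by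
  have h : HasDerivAt (fun y : ℝ => -y ^ 2) (-(2 * z)) z := by
    exact ((hasDerivAt_pow 2 z).neg).congr_deriv (by simp)
  have := h.exp
  convert this using 1
  ring

lemma hd1 (y : ℝ) : HasDerivAt erf (ef1 y) y := by
  have hc : Continuous fun r : ℝ => Real.exp (-r ^ 2) := by continuity
  have h := (hc.integral_hasStrictDerivAt 0 y).hasDerivAt
  have h2 := h.const_mul (2 / Real.sqrt Real.pi)
  exact h2

lemma hd2 (y : ℝ) : HasDerivAt ef1 (ef2 y) y := by
  have := (hasDerivAt_negsq_exp y).const_mul (2 / Real.sqrt Real.pi)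
  refine this.congr_deriv ?_
  unfold ef2; ring

lemma hd3 (y : ℝ) : HasDerivAt ef2 (ef3 y) y := by
  have hp : HasDerivAt (fun z : ℝ => 2 / Real.sqrt Real.pi * (-2 * z))
      (2 / Real.sqrt Real.pi * (-2)) y := by
    simpa using ((hasDerivAt_id y).const_mul 2).neg.const_mul (2 / Real.sqrt Real.pi)
  have := hp.mul (hasDerivAt_negsq_exp y)
  refine this.congr_deriv ?_
  unfold ef3; ring

lemma hd4 (y : ℝ) : HasDerivAt ef3 (ef4 y) y := by
  have hp : HasDerivAt (fun z : ℝ => 2 / Real.sqrt Real.pi * (4 * z ^ 2 - 2))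
      (2 / Real.sqrt Real.pi * (8 * y)) y := by
    have : HasDerivAt (fun z : ℝ => 4 * z ^ 2 - 2) (8 * y) y := by
      have h := ((hasDerivAt_pow 2 y).const_mul 4).sub_const 2
      refine h.congr_deriv ?_
      rw [show (2:ℕ) - 1 = 1 from rfl]; push_cast; ring
    exact this.const_mul _
  have := hp.mul (hasDerivAt_negsq_exp y)
  refine this.congr_deriv ?_
  unfold ef4; ring

lemma deriv_scale {g g' : ℝ → ℝ} (hg : ∀ y, HasDerivAt g (g' y) y) (A c : ℝ) :
    deriv (fun ξ => A * g (c * ξ)) = fun ξ => A * c * g' (c * ξ) := by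
  funext x
  have hinner : HasDerivAt (fun ξ : ℝ => c * ξ) c x := by
    simpa using (hasDerivAt_id x).const_mul c
  have h := ((hg (c * x)).comp x hinner).const_mul A
  have h' : HasDerivAt (fun ξ => A * g (c * ξ)) (A * (g' (c * x) * c)) x := h
  rw [h'.deriv]; ring

lemma iter4 (A c : ℝ) :
    iteratedDeriv 4 (fun ξ => A * erf (c * ξ)) =
      fun ξ => A * c * c * c * c * ef4 (c * ξ) := by
  rw [iteratedDeriv_eq_iterate]
  show deriv (deriv (deriv (deriv (fun ξ => A * erf (c * ξ))))) = _
  rw [deriv_scale hd1, deriv_scale hd2, deriv_scale hd3, deriv_scale hd4]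

lemma cube_le (z : ℝ) (hz : 0 ≤ z) : z ^ 3 ≤ 27 * Real.exp z := by
  have h1 := Real.add_one_le_exp (z / 3)
  have h0 : z / 3 ≤ Real.exp (z / 3) := by linarith
  have h2 : (z / 3) ^ 3 ≤ Real.exp (z / 3) ^ 3 := by
    apply pow_le_pow_left₀ (by positivity) h0
  have h3 : Real.exp (z / 3) ^ 3 = Real.exp z := by
    rw [← Real.exp_nat_mul]
    congr 1
    push_cast; ring
  nlinarith [h2, h3]

set_option maxHeartbeats 1000000 in
/-- There is an absolute constant `C > 0` such that for all `ε > 0`, `b₀ ≥ 0`, `T > 0`,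
`x ≥ 0` and `0 < t ≤ T`, `ε² |∂ₓ⁴ s₂(x,t)| ≤ C e^{−x/(2√(ε T))}`. -/
theorem s₂_fourth_derivative_bound :
    ∃ C : ℝ, 0 < C ∧ ∀ ε b₀ T x t : ℝ, 0 < ε → 0 ≤ b₀ → 0 < T → 0 ≤ x →
      0 < t → t ≤ T →
      ε ^ 2 * |iteratedDeriv 4 (fun ξ => s₂ ε b₀ ξ t) x|
        ≤ C * Real.exp (-x / (2 * Real.sqrt (ε * T))) := by
  refine ⟨228 * Real.exp 1, by positivity, ?_⟩
  intro ε b₀ T x t hε hb₀ hT hx ht htT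
  set c : ℝ := (2 * Real.sqrt (ε * t))⁻¹ with hc
  have hst : 0 < Real.sqrt (ε * t) := Real.sqrt_pos.2 (by positivity)
  have hcpos : 0 < c := by positivity
  set A : ℝ := t ^ 2 * Real.exp (-b₀ * t) with hA
  have hfun : (fun ξ => s₂ ε b₀ ξ t) = fun ξ => A * erf (c * ξ) := by
    funext ξ
    have harg : ξ / (2 * Real.sqrt (ε * t)) = c * ξ := by
      rw [hc, div_eq_mul_inv]; ring
    simp only [s₂, s, hA, harg]; ring
  rw [hfun, iter4]
  set z : ℝ := c * x with hz
  have hz0 : 0 ≤ z := by positivity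
  -- compute the prefactor
  have hsq : Real.sqrt (ε * t) ^ 2 = ε * t := Real.sq_sqrt (by positivity)
  have hpre : ε ^ 2 * |A * c * c * c * c * ef4 z| =
      Real.exp (-b₀ * t) / 16 * |ef4 z| := by
    rw [abs_mul, abs_mul, abs_mul, abs_mul, abs_mul]
    have hAz : |A| = A := abs_of_nonneg (by positivity)
    have hcz : |c| = c := abs_of_nonneg hcpos.le
    rw [hAz, hcz]
    have hs4 : (2 * Real.sqrt (ε * t)) ^ 4 = 16 * (ε * t) ^ 2 := by
      have h : (2 * Real.sqrt (ε * t)) ^ 4 = 16 * (Real.sqrt (ε * t) ^ 2) ^ 2 := by ring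
      rw [h, hsq]
    have hc4 : c * c * c * c = 1 / (16 * (ε * t) ^ 2) := by
      rw [hc, ← hs4]
      field_simp
    have hre : ε ^ 2 * (A * c * c * c * c * |ef4 z|) =
        ε ^ 2 * A * (c * c * c * c) * |ef4 z| := by ring
    rw [hre, hc4, hA]
    have h16 : (16 : ℝ) * (ε * t) ^ 2 ≠ 0 := by positivity
    field_simp
  rw [hpre]
  -- bound |ef4 z|
  have hk : 2 / Real.sqrt Real.pi ≤ 2 := by
    rw [div_le_iff₀ (Real.sqrt_pos.2 Real.pi_pos)]
    nlinarith [Real.sq_sqrt Real.pi_pos.le, Real.sqrt_nonneg Real.pi, Real.pi_gt_three,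
      sq_nonneg (Real.sqrt Real.pi - 1)]
  have hkpos : 0 < 2 / Real.sqrt Real.pi := by positivity
  have hef4 : |ef4 z| ≤ 2 * (12 * z + 8 * z ^ 3) * Real.exp (-z ^ 2) := by
    unfold ef4
    rw [abs_mul, abs_mul]
    have h1 : |2 / Real.sqrt Real.pi| ≤ 2 := by
      rwa [abs_of_nonneg hkpos.le]
    have h2 : |12 * z - 8 * z ^ 3| ≤ 12 * z + 8 * z ^ 3 := by
      rw [abs_sub_comm]
      refine (abs_sub _ _).trans ?_
      have : |8 * z ^ 3| = 8 * z ^ 3 := abs_of_nonneg (by positivity)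
      have h12 : |12 * z| = 12 * z := abs_of_nonneg (by positivity)
      rw [this, h12]; linarith
    have h3 : |Real.exp (-z ^ 2)| = Real.exp (-z ^ 2) := abs_of_nonneg (Real.exp_pos _).le
    rw [h3]
    have hnn : (0:ℝ) ≤ Real.exp (-z^2) := (Real.exp_pos _).le
    apply mul_le_mul_of_nonneg_right _ hnn
    apply mul_le_mul h1 h2 (abs_nonneg _) (by norm_num)
  -- e^{-z²} ≤ e · e^{-z} · e^{-z}
  have hE : Real.exp (-z ^ 2) ≤ Real.exp 1 * Real.exp (-z) * Real.exp (-z) := by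
    rw [← Real.exp_add, ← Real.exp_add]
    apply Real.exp_le_exp.2
    nlinarith [sq_nonneg (z - 1)]
  have hpoly : (12 * z + 8 * z ^ 3) * Real.exp (-z) ≤ 228 := by
    have he : 0 < Real.exp z := Real.exp_pos z
    have hi : 0 < (Real.exp z)⁻¹ := by positivity
    have h1 : z * Real.exp (-z) ≤ 1 := by
      have hle := Real.add_one_le_exp z
      have hp := mul_le_mul_of_nonneg_right hle hi.le
      rw [mul_inv_cancel₀ he.ne'] at hp
      rw [Real.exp_neg]
      nlinarith
    have h2 : z ^ 3 * Real.exp (-z) ≤ 27 := by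
      have hle := cube_le z hz0
      have hp := mul_le_mul_of_nonneg_right hle hi.le
      rw [mul_assoc, mul_inv_cancel₀ he.ne', mul_one] at hp
      rw [Real.exp_neg]
      nlinarith
    nlinarith [Real.exp_pos (-z)]
  -- z ≥ ζ := x/(2√(εT))
  have hzeta : -z ≤ -x / (2 * Real.sqrt (ε * T)) := by
    have hsT : 0 < Real.sqrt (ε * T) := Real.sqrt_pos.2 (by positivity)
    have hmono : Real.sqrt (ε * t) ≤ Real.sqrt (ε * T) :=
      Real.sqrt_le_sqrt (by nlinarith)
    have : x / (2 * Real.sqrt (ε * T)) ≤ x / (2 * Real.sqrt (ε * t)) :=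
      div_le_div_of_nonneg_left hx (by positivity) (by linarith)
    have hzeq : z = x / (2 * Real.sqrt (ε * t)) := by
      rw [hz, hc, div_eq_mul_inv]; ring
    rw [neg_div, hzeq]
    linarith
  have hexpz : Real.exp (-z) ≤ Real.exp (-x / (2 * Real.sqrt (ε * T))) := by
    exact Real.exp_le_exp.2 hzeta
  -- put it together
  have hEb : Real.exp (-b₀ * t) ≤ 1 := Real.exp_le_one_iff.2 (by nlinarith)
  have hEbpos : 0 < Real.exp (-b₀ * t) := Real.exp_pos _
  have hstep : |ef4 z| ≤ 2 * 228 * Real.exp 1 * Real.exp (-z) := by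
    calc |ef4 z| ≤ 2 * (12 * z + 8 * z ^ 3) * Real.exp (-z ^ 2) := hef4
      _ ≤ 2 * (12 * z + 8 * z ^ 3) * (Real.exp 1 * Real.exp (-z) * Real.exp (-z)) := by
          apply mul_le_mul_of_nonneg_left hE (by positivity)
      _ = 2 * Real.exp 1 * Real.exp (-z) * ((12 * z + 8 * z ^ 3) * Real.exp (-z)) := by ring
      _ ≤ 2 * Real.exp 1 * Real.exp (-z) * 228 := by
          apply mul_le_mul_of_nonneg_left hpoly (by positivity)
      _ = 2 * 228 * Real.exp 1 * Real.exp (-z) := by ring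
  calc Real.exp (-b₀ * t) / 16 * |ef4 z|
      ≤ 1 / 16 * (2 * 228 * Real.exp 1 * Real.exp (-z)) := by
        apply mul_le_mul (by linarith) hstep (abs_nonneg _) (by norm_num)
    _ ≤ 228 * Real.exp 1 * Real.exp (-z) := by nlinarith [Real.exp_pos 1, Real.exp_pos (-z)]
    _ ≤ 228 * Real.exp 1 * Real.exp (-x / (2 * Real.sqrt (ε * T))) := by
        apply mul_le_mul_of_nonneg_left hexpz (by positivity)
end

section
/- For every b₀ ≥ 0 there exists a constant C > 0, depending only on b₀, such that for every ε > 0, every x ∈ ℝ and every t > 0, the function s₂(x,t) := t² s(x,t) satisfies |∂ₜₜ s₂(x,t)| ≤ C. (The second time derivative of s₂ is uniformly bounded, although it is not continuous up to t = 0.) -/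
lemma integral_exp_neg_sq_le {z : ℝ} (hz : 0 ≤ z) :
    (0:ℝ) ≤ (∫ r in (0:ℝ)..z, Real.exp (-r ^ 2)) ∧
    (∫ r in (0:ℝ)..z, Real.exp (-r ^ 2)) ≤ Real.sqrt Real.pi / 2 := by
  have hint : MeasureTheory.IntegrableOn (fun r : ℝ => Real.exp (-r ^ 2)) (Set.Ioi 0) := by
    simpa using (integrable_exp_neg_mul_sq one_pos).integrableOn
  have hIoi : (∫ r in Set.Ioi (0:ℝ), Real.exp (-r ^ 2)) = Real.sqrt Real.pi / 2 := by
    simpa using integral_gaussian_Ioi 1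
  rw [intervalIntegral.integral_of_le hz]
  constructor
  · positivity
  · rw [← hIoi]
    apply MeasureTheory.setIntegral_mono_set hint
    · filter_upwards with r using (Real.exp_pos _).le
    · exact (Set.Ioc_subset_Ioi_self).eventuallyLE

lemma abs_erf_le_one (z : ℝ) : |erf z| ≤ 1 := by
  have hπ : (0:ℝ) < Real.sqrt Real.pi := Real.sqrt_pos.2 Real.pi_pos
  have key : ∀ w : ℝ, 0 ≤ w → |erf w| ≤ 1 := by
    intro w hw
    obtain ⟨h0, h1⟩ := integral_exp_neg_sq_le hw
    rw [erf, abs_mul, abs_of_nonneg (by positivity : (0:ℝ) ≤ 2 / Real.sqrt Real.pi),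
      abs_of_nonneg h0]
    rw [div_mul_eq_mul_div, div_le_one hπ]
    nlinarith
  rcases le_or_gt 0 z with hz | hz
  · exact key z hz
  · have hodd : erf z = -erf (-z) := by
      rw [erf, erf]
      have : (∫ r in (0:ℝ)..(-z), Real.exp (-r ^ 2))
          = ∫ r in (0:ℝ)..(-z), Real.exp (-(-r) ^ 2) := by simp
      rw [this, intervalIntegral.integral_comp_neg (fun r => Real.exp (-r ^ 2))]
      rw [intervalIntegral.integral_symm, neg_neg, neg_zero, mul_neg]
    rw [hodd, abs_neg]
    exact key (-z) (by linarith)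

lemma aux_uE (u : ℝ) : |u| * Real.exp (-u ^ 2) ≤ 1 := by
  have h1 : |u| ≤ Real.exp (u ^ 2) := by
    nlinarith [sq_nonneg (|u| - 1), sq_abs u, Real.add_one_le_exp (u ^ 2)]
  rw [Real.exp_neg, mul_inv_le_iff₀ (Real.exp_pos _), one_mul]
  exact h1

lemma aux_u3E (u : ℝ) : |u| ^ 3 * Real.exp (-u ^ 2) ≤ 2 := by
  have hq : 1 + u ^ 2 + (u ^ 2) ^ 2 / 2 ≤ Real.exp (u ^ 2) :=
    Real.quadratic_le_exp_of_nonneg (sq_nonneg u)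
  have h1 : |u| ^ 3 ≤ 2 * Real.exp (u ^ 2) := by
    nlinarith [sq_nonneg (|u| - 1), sq_abs u, abs_nonneg u, sq_nonneg (|u| ^ 2 - |u|)]
  rw [Real.exp_neg, mul_inv_le_iff₀ (Real.exp_pos _)]
  linarith

lemma aux_AE {A : ℝ} (hA : 0 ≤ A) : A * Real.exp (-A) ≤ 1 := by
  rw [Real.exp_neg, mul_inv_le_iff₀ (Real.exp_pos _), one_mul]
  linarith [Real.add_one_le_exp A]

lemma aux_A2E {A : ℝ} (hA : 0 ≤ A) : A ^ 2 * Real.exp (-A) ≤ 2 := by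
  rw [Real.exp_neg, mul_inv_le_iff₀ (Real.exp_pos _)]
  nlinarith [Real.quadratic_le_exp_of_nonneg hA]

noncomputable def g1 (b₀ c t : ℝ) : ℝ :=
  Real.exp (-b₀ * t) * ((2 * t - b₀ * t ^ 2) * erf (c / Real.sqrt t)
    - Real.sqrt t * c / Real.sqrt Real.pi * Real.exp (-(c / Real.sqrt t) ^ 2))

lemma sqrt_pieces {t : ℝ} (ht : 0 < t) :
    Real.sqrt t ≠ 0 ∧ Real.sqrt t ^ 2 = t := ⟨(Real.sqrt_pos.2 ht).ne', Real.sq_sqrt ht.le⟩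

lemma u_hasDerivAt {c t : ℝ} (ht : 0 < t) :
    HasDerivAt (fun τ => c / Real.sqrt τ) (-(c / (2 * t * Real.sqrt t))) t := by
  obtain ⟨hS0, hS2⟩ := sqrt_pieces ht
  have h := (hasDerivAt_const t c).div (Real.hasDerivAt_sqrt ht.ne') hS0
  refine h.congr_deriv (Eq.symm ?_)
  rw [hS2]
  field_simp
  ring_nf

lemma lemA {b₀ c t : ℝ} (ht : 0 < t) :
    HasDerivAt (fun τ => τ ^ 2 * (Real.exp (-b₀ * τ) * erf (c / Real.sqrt τ)))
      (g1 b₀ c t) t := by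
  obtain ⟨hS0, hS2⟩ := sqrt_pieces ht
  have h2 := u_hasDerivAt (c := c) ht
  have h3 : HasDerivAt (fun τ => erf (c / Real.sqrt τ))
      ((2 / Real.sqrt Real.pi * Real.exp (-(c / Real.sqrt t) ^ 2))
        * (-(c / (2 * t * Real.sqrt t)))) t :=
    (erf_hasDerivAt _).comp t h2
  have h4 : HasDerivAt (fun τ => Real.exp (-b₀ * τ))
      (Real.exp (-b₀ * t) * (-b₀)) t := by
    simpa using (((hasDerivAt_id t).const_mul (-b₀))).exp
  have h5 : HasDerivAt (fun τ : ℝ => τ ^ 2) (2 * t) t := by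
    simpa using hasDerivAt_pow 2 t
  have h := h5.mul (h4.mul h3)
  refine h.congr_deriv (Eq.symm ?_)
  simp only [Pi.mul_apply, Pi.sub_apply]
  unfold g1
  have hπ : Real.sqrt Real.pi ≠ 0 := (Real.sqrt_pos.2 Real.pi_pos).ne'
  set S := Real.sqrt t with hSdef
  rw [← hS2]
  field_simp
  ring

noncomputable def G (b₀ c t : ℝ) : ℝ :=
  Real.exp (-b₀ * t) *
    (((b₀ * t) ^ 2 - 4 * (b₀ * t) + 2) * erf (c / Real.sqrt t)
      + (2 * (b₀ * t) - 5 / 2) / Real.sqrt Real.pi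
          * (c / Real.sqrt t * Real.exp (-(c / Real.sqrt t) ^ 2))
      - (c / Real.sqrt t) ^ 3 * Real.exp (-(c / Real.sqrt t) ^ 2) / Real.sqrt Real.pi)

lemma lemB {b₀ c t : ℝ} (ht : 0 < t) :
    HasDerivAt (fun τ => g1 b₀ c τ) (G b₀ c t) t := by
  simp only [g1]
  obtain ⟨hS0, hS2⟩ := sqrt_pieces ht
  have h2 := u_hasDerivAt (c := c) ht
  have h3 : HasDerivAt (fun τ => erf (c / Real.sqrt τ))
      ((2 / Real.sqrt Real.pi * Real.exp (-(c / Real.sqrt t) ^ 2))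
        * (-(c / (2 * t * Real.sqrt t)))) t :=
    (erf_hasDerivAt _).comp t h2
  have h4 : HasDerivAt (fun τ => Real.exp (-b₀ * τ))
      (Real.exp (-b₀ * t) * (-b₀)) t := by
    simpa using (((hasDerivAt_id t).const_mul (-b₀))).exp
  have hP : HasDerivAt (fun τ : ℝ => 2 * τ - b₀ * τ ^ 2) (2 - b₀ * (2 * t)) t := by
    have := ((hasDerivAt_id t).const_mul 2).sub ((hasDerivAt_pow 2 t).const_mul b₀)
    exact this.congr_deriv (by norm_num)
  have hE : HasDerivAt (fun τ => Real.exp (-(c / Real.sqrt τ) ^ 2))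
      (Real.exp (-(c / Real.sqrt t) ^ 2)
        * -(2 * (c / Real.sqrt t) ^ 1 * (-(c / (2 * t * Real.sqrt t))))) t := by
    exact ((h2.pow 2).neg).exp
  have hB := (((Real.hasDerivAt_sqrt ht.ne').mul_const c).div_const
      (Real.sqrt Real.pi)).mul hE
  have h := h4.mul ((hP.mul h3).sub hB)
  refine h.congr_deriv (Eq.symm ?_)
  simp only [Pi.mul_apply, Pi.sub_apply]
  unfold G
  have hπ : Real.sqrt Real.pi ≠ 0 := (Real.sqrt_pos.2 Real.pi_pos).ne'
  set S := Real.sqrt t with hSdef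
  rw [← hS2]
  field_simp
  ring

lemma G_bound {b₀ c t : ℝ} (hb : 0 ≤ b₀) (ht : 0 < t) : |G b₀ c t| ≤ 100 := by
  unfold G
  set u := c / Real.sqrt t with hu
  have hπ : 1 ≤ Real.sqrt Real.pi := by
    rw [show (1:ℝ) = Real.sqrt 1 by simp]
    exact Real.sqrt_le_sqrt (by linarith [Real.pi_gt_three])
  have hπ0 : (0:ℝ) < Real.sqrt Real.pi := by linarith
  have hA0 : 0 ≤ b₀ * t := mul_nonneg hb ht.le
  set A := b₀ * t with hA
  have hX := abs_erf_le_one u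
  have hw := aux_uE u
  have hv := aux_u3E u
  have hE0 : 0 < Real.exp (-u ^ 2) := Real.exp_pos _
  have h1 : |(A ^ 2 - 4 * A + 2) * erf u| ≤ A ^ 2 + 4 * A + 2 := by
    rw [abs_mul]
    have e1 : |A ^ 2 - 4 * A + 2| ≤ A ^ 2 + 4 * A + 2 := by
      rw [abs_le]; constructor <;> nlinarith
    nlinarith [abs_nonneg (erf u), abs_nonneg (A ^ 2 - 4 * A + 2)]
  have h2 : |(2 * A - 5 / 2) / Real.sqrt Real.pi * (u * Real.exp (-u ^ 2))| ≤ 2 * A + 5 / 2 := by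
    rw [abs_mul, abs_div]
    have e1 : |2 * A - 5 / 2| ≤ 2 * A + 5 / 2 := by
      rw [abs_le]; constructor <;> nlinarith
    have e2 : |u * Real.exp (-u ^ 2)| ≤ 1 := by
      rw [abs_mul, abs_of_pos hE0]; exact hw
    have e3 : |2 * A - 5 / 2| / |Real.sqrt Real.pi| ≤ |2 * A - 5 / 2| := by
      rw [abs_of_pos hπ0]
      exact div_le_self (abs_nonneg _) hπ
    have e4 : |2 * A - 5 / 2| / |Real.sqrt Real.pi| * |u * Real.exp (-u ^ 2)|
        ≤ |2 * A - 5 / 2| * 1 :=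
      mul_le_mul e3 e2 (abs_nonneg _) (abs_nonneg _)
    linarith
  have h3 : |u ^ 3 * Real.exp (-u ^ 2) / Real.sqrt Real.pi| ≤ 2 := by
    rw [abs_div, abs_of_pos hπ0]
    refine (div_le_self (abs_nonneg _) hπ).trans ?_
    rw [abs_mul, abs_pow, abs_of_pos hE0]
    exact hv
  have hsum : |(A ^ 2 - 4 * A + 2) * erf u
      + (2 * A - 5 / 2) / Real.sqrt Real.pi * (u * Real.exp (-u ^ 2))
      - u ^ 3 * Real.exp (-u ^ 2) / Real.sqrt Real.pi| ≤ A ^ 2 + 6 * A + 7 := by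
    have := abs_sub ((A ^ 2 - 4 * A + 2) * erf u
      + (2 * A - 5 / 2) / Real.sqrt Real.pi * (u * Real.exp (-u ^ 2)))
      (u ^ 3 * Real.exp (-u ^ 2) / Real.sqrt Real.pi)
    have := abs_add_le ((A ^ 2 - 4 * A + 2) * erf u)
      ((2 * A - 5 / 2) / Real.sqrt Real.pi * (u * Real.exp (-u ^ 2)))
    linarith [abs_sub ((A ^ 2 - 4 * A + 2) * erf u
      + (2 * A - 5 / 2) / Real.sqrt Real.pi * (u * Real.exp (-u ^ 2)))
      (u ^ 3 * Real.exp (-u ^ 2) / Real.sqrt Real.pi)]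
  have hexp : Real.exp (-b₀ * t) = Real.exp (-A) := by rw [hA, neg_mul]
  rw [hexp, abs_mul, abs_of_pos (Real.exp_pos _)]
  have hE1 : Real.exp (-A) ≤ 1 := Real.exp_le_one_iff.2 (by linarith)
  have hfin : Real.exp (-A) * (A ^ 2 + 6 * A + 7) ≤ 15 := by
    nlinarith [aux_AE hA0, aux_A2E hA0, Real.exp_pos (-A)]
  nlinarith [mul_le_mul_of_nonneg_left hsum (Real.exp_pos (-A)).le, Real.exp_pos (-A)]

/-- For every `b₀ ≥ 0` there is a constant `C > 0`, depending only on `b₀`, such that for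
every `ε > 0`, `x ∈ ℝ` and `t > 0`, `|∂ₜₜ s₂(x,t)| ≤ C`. -/
theorem s₂_second_time_derivative_bound (b₀ : ℝ) (hb : 0 ≤ b₀) :
    ∃ C : ℝ, 0 < C ∧ ∀ ε x t : ℝ, 0 < ε → 0 < t →
      |deriv (deriv (fun τ => s₂ ε b₀ x τ)) t| ≤ C := by
  refine ⟨100, by norm_num, fun ε x t hε ht => ?_⟩
  set c := x / (2 * Real.sqrt ε) with hc
  have hfun : (fun τ => s₂ ε b₀ x τ)
      = fun τ => τ ^ 2 * (Real.exp (-b₀ * τ) * erf (c / Real.sqrt τ)) := by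
    funext τ
    unfold s₂ s
    have harg : x / (2 * Real.sqrt (ε * τ)) = c / Real.sqrt τ := by
      rw [Real.sqrt_mul hε.le, hc, div_div, mul_assoc]
    rw [harg]
  rw [hfun]
  have hev : deriv (fun τ => τ ^ 2 * (Real.exp (-b₀ * τ) * erf (c / Real.sqrt τ)))
      =ᶠ[nhds t] g1 b₀ c := by
    filter_upwards [Ioi_mem_nhds ht] with τ hτ
    exact (lemA hτ).deriv
  rw [hev.deriv_eq, (lemB ht).deriv]
  exact G_bound hb ht
end
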